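/- Single-coordinate symmetrization on a partite complex: for X a d-partite complex, f : X(d) → ℝ, coordinate i ∈ [d], and q > 1, ‖T^i_{1/2} f‖_q ≤ ‖T^i_r f‖_{q}, where r is a uniform ±1 random bit (the norm on the right also averages over r). -/

import Mathlib

open Finset BigOperators

/-- Conditional expectation operator `E_T` on a `d`-partite space:
`E_T f (x) = E[f(y) | y_T = x_T]` under the (finitely supported) measure `μ`. -/
noncomputable def projE {d : ℕ} {Ω : Type} [Fintype Ω] [DecidableEq Ω]
    (μ : (Fin d → Ω) → ℝ) (T : Finset (Fin d))
    (f : (Fin d → Ω) → ℝ) (x : Fin d → Ω) : ℝ :=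
  (∑ y : Fin d → Ω, if ∀ i ∈ T, y i = x i then μ y * f y else 0) /
  (∑ y : Fin d → Ω, if ∀ i ∈ T, y i = x i then μ y else 0)

/-- Efron–Stein component `f^{=S} = ∑_{T ⊆ S} (-1)^{|S|-|T|} E_T f`. -/
noncomputable def esComp {d : ℕ} {Ω : Type} [Fintype Ω] [DecidableEq Ω]
    (μ : (Fin d → Ω) → ℝ) (S : Finset (Fin d))
    (f : (Fin d → Ω) → ℝ) : (Fin d → Ω) → ℝ :=
  fun x => ∑ T ∈ S.powerset, (-1 : ℝ) ^ (S.card - T.card) * projE μ T f x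

/-- `L^q` norm with respect to the probability mass function `μ`. -/
noncomputable def pnorm {α : Type} [Fintype α] (μ : α → ℝ) (q : ℝ) (f : α → ℝ) : ℝ :=
  (∑ x, μ x * |f x| ^ q) ^ (1 / q)

/-- Conditional (link) measure obtained from `μ` by conditioning the coordinates
in `R` to agree with `z`. -/
noncomputable def condMeasure {d : ℕ} {Ω : Type} [Fintype Ω] [DecidableEq Ω]
    (μ : (Fin d → Ω) → ℝ) (R : Finset (Fin d)) (z : Fin d → Ω) :
    (Fin d → Ω) → ℝ :=
  fun y => (if ∀ i ∈ R, y i = z i then μ y else 0) /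
    (∑ y' : Fin d → Ω, if ∀ i ∈ R, y' i = z i then μ y' else 0)

/-- Single-coordinate noise operator `T^i_c = c·I + (1−c)·E_{[d]\{i}}`. -/
noncomputable def coordT {d : ℕ} {Ω : Type} [Fintype Ω] [DecidableEq Ω]
    (μ : (Fin d → Ω) → ℝ) (i : Fin d) (c : ℝ) (f : (Fin d → Ω) → ℝ) :
    (Fin d → Ω) → ℝ :=
  fun x => c * f x + (1 - c) * projE μ (univ.erase i) f x

/-!
Write `E` for the conditional expectation onto the coordinates other than `i`, so that
`T^i_c f = c f + (1 - c) E f` and `E (T^i_c f) = E f` for every `c`. Then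
`T^i_{1/2} f = ½ T^i_1 f + ½ E (T^i_{-1} f)`, and convexity of `|·|^q` bounds
`|T^i_{1/2} f|^q` pointwise by the average of `|T^i_1 f|^q` and `|E (T^i_{-1} f)|^q`.
The last term has total mass at most that of `|T^i_{-1} f|^q`, since `E` is an `L^q`
contraction: Jensen's inequality on each link (the conditional measure on a fibre of the
coordinates outside `i`), followed by the tower property of `E`.
-/

lemma convexOn_abs_rpow {p : ℝ} (hp : 1 ≤ p) : ConvexOn ℝ Set.univ fun x : ℝ => |x| ^ p := by
  refine ⟨convex_univ, fun x _ y _ a b ha hb hab => ?_⟩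
  calc |a • x + b • y| ^ p ≤ (a • |x| + b • |y|) ^ p := by
        gcongr
        calc |a • x + b • y| ≤ |a • x| + |b • y| := abs_add_le _ _
          _ = a • |x| + b • |y| := by
            simp only [smul_eq_mul, abs_mul, abs_of_nonneg ha, abs_of_nonneg hb]
    _ ≤ a • |x| ^ p + b • |y| ^ p :=
        (convexOn_rpow hp).2 (abs_nonneg x) (abs_nonneg y) ha hb hab

section ConditionalExpectation

variable {d : ℕ} {Ω : Type} [Fintype Ω] [DecidableEq Ω]

lemma fiber_sum_congr (T : Finset (Fin d)) (g : (Fin d → Ω) → ℝ) {x y : Fin d → Ω}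
    (h : ∀ j ∈ T, y j = x j) :
    (∑ z : Fin d → Ω, if ∀ j ∈ T, z j = y j then g z else 0)
      = ∑ z : Fin d → Ω, if ∀ j ∈ T, z j = x j then g z else 0 :=
  sum_congr rfl fun _ _ => if_congr
    ⟨fun hz j hj => (hz j hj).trans (h j hj), fun hz j hj => (hz j hj).trans (h j hj).symm⟩
    rfl rfl

lemma projE_congr (μ : (Fin d → Ω) → ℝ) (T : Finset (Fin d)) (f : (Fin d → Ω) → ℝ)
    {x y : Fin d → Ω} (h : ∀ j ∈ T, y j = x j) : projE μ T f y = projE μ T f x := by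
  unfold projE
  rw [fiber_sum_congr T _ h, fiber_sum_congr T _ h]

lemma projE_eq_sum_condMeasure (μ : (Fin d → Ω) → ℝ) (T : Finset (Fin d))
    (f : (Fin d → Ω) → ℝ) (x : Fin d → Ω) :
    projE μ T f x = ∑ y, condMeasure μ T x y * f y := by
  unfold projE condMeasure
  rw [sum_div]
  exact sum_congr rfl fun y _ => by split_ifs <;> ring

lemma condMeasure_nonneg {μ : (Fin d → Ω) → ℝ} (hμ0 : ∀ x, 0 ≤ μ x) (T : Finset (Fin d))
    (x y : Fin d → Ω) : 0 ≤ condMeasure μ T x y := by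
  unfold condMeasure
  refine div_nonneg ?_ (sum_nonneg fun _ _ => ?_) <;> split_ifs <;> simp [hμ0]

lemma sum_condMeasure (μ : (Fin d → Ω) → ℝ) (T : Finset (Fin d)) {x : Fin d → Ω}
    (hx : (∑ y : Fin d → Ω, if ∀ j ∈ T, y j = x j then μ y else 0) ≠ 0) :
    ∑ y, condMeasure μ T x y = 1 := by
  unfold condMeasure
  rw [← sum_div, div_self hx]

lemma projE_of_fiber_mass_eq_zero (μ : (Fin d → Ω) → ℝ) (T : Finset (Fin d))
    (f : (Fin d → Ω) → ℝ) {x : Fin d → Ω}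
    (hx : (∑ y : Fin d → Ω, if ∀ j ∈ T, y j = x j then μ y else 0) = 0) :
    projE μ T f x = 0 := by
  unfold projE
  rw [hx, div_zero]

lemma projE_linear (μ : (Fin d → Ω) → ℝ) (T : Finset (Fin d)) (f g : (Fin d → Ω) → ℝ)
    (a b : ℝ) (x : Fin d → Ω) :
    projE μ T (fun z => a * f z + b * g z) x = a * projE μ T f x + b * projE μ T g x := by
  simp only [projE_eq_sum_condMeasure, mul_sum, ← sum_add_distrib]
  exact sum_congr rfl fun y _ => by ring

lemma projE_projE (μ : (Fin d → Ω) → ℝ) (T : Finset (Fin d)) (f : (Fin d → Ω) → ℝ)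
    (x : Fin d → Ω) : projE μ T (projE μ T f) x = projE μ T f x := by
  by_cases hx : (∑ y : Fin d → Ω, if ∀ j ∈ T, y j = x j then μ y else 0) = 0
  · rw [projE_of_fiber_mass_eq_zero μ T _ hx, projE_of_fiber_mass_eq_zero μ T _ hx]
  · have hfiber : ∀ y, condMeasure μ T x y * projE μ T f y
        = condMeasure μ T x y * projE μ T f x := fun y => by
      by_cases hy : ∀ j ∈ T, y j = x j
      · rw [projE_congr μ T f hy]
      · simp [condMeasure, hy]
    rw [projE_eq_sum_condMeasure, sum_congr rfl fun y _ => hfiber y, ← sum_mul,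
      sum_condMeasure μ T hx, one_mul]

lemma abs_projE_rpow_le {μ : (Fin d → Ω) → ℝ} (hμ0 : ∀ x, 0 ≤ μ x) (T : Finset (Fin d))
    (g : (Fin d → Ω) → ℝ) {q : ℝ} (hq : 1 ≤ q) (x : Fin d → Ω) :
    |projE μ T g x| ^ q ≤ projE μ T (fun z => |g z| ^ q) x := by
  by_cases hx : (∑ y : Fin d → Ω, if ∀ j ∈ T, y j = x j then μ y else 0) = 0
  · rw [projE_of_fiber_mass_eq_zero μ T _ hx, projE_of_fiber_mass_eq_zero μ T _ hx, abs_zero,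
      Real.zero_rpow (by linarith)]
  · simpa only [projE_eq_sum_condMeasure, smul_eq_mul] using
      (convexOn_abs_rpow hq).map_sum_le (fun y _ => condMeasure_nonneg hμ0 T x y)
        (sum_condMeasure μ T hx) (fun y _ => Set.mem_univ (g y))

lemma sum_mul_condMeasure {μ : (Fin d → Ω) → ℝ} (hμ0 : ∀ x, 0 ≤ μ x) (T : Finset (Fin d))
    (y : Fin d → Ω) : ∑ x, μ x * condMeasure μ T x y = μ y := by
  set D := ∑ z : Fin d → Ω, if ∀ j ∈ T, z j = y j then μ z else 0
  have hterm : ∀ x, μ x * condMeasure μ T x y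
      = (if ∀ j ∈ T, x j = y j then μ x else 0) / D * μ y := fun x => by
    by_cases hxy : ∀ j ∈ T, x j = y j
    · have hyx : ∀ j ∈ T, y j = x j := fun j hj => (hxy j hj).symm
      simp only [condMeasure, if_pos hxy, if_pos hyx, fiber_sum_congr T μ hxy]
      ring
    · have hyx : ¬∀ j ∈ T, y j = x j := fun h => hxy fun j hj => (h j hj).symm
      simp [condMeasure, hxy, hyx]
  rw [sum_congr rfl fun x _ => hterm x, ← sum_mul, ← sum_div]
  by_cases hD : D = 0
  · -- a point of a null fibre has mass zero
    have hy : (if ∀ j ∈ T, y j = y j then μ y else 0) = 0 :=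
      (sum_eq_zero_iff_of_nonneg fun z _ => by split_ifs <;> simp [hμ0]).mp hD y (mem_univ y)
    rw [if_pos fun _ _ => rfl] at hy
    rw [hy, mul_zero]
  · rw [div_self hD, one_mul]

lemma sum_mul_projE {μ : (Fin d → Ω) → ℝ} (hμ0 : ∀ x, 0 ≤ μ x) (T : Finset (Fin d))
    (g : (Fin d → Ω) → ℝ) : ∑ x, μ x * projE μ T g x = ∑ x, μ x * g x := by
  simp only [projE_eq_sum_condMeasure, mul_sum]
  rw [sum_comm]
  refine sum_congr rfl fun y _ => ?_
  rw [← sum_mul_condMeasure hμ0 T y, sum_mul]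
  exact sum_congr rfl fun x _ => by ring

lemma sum_mul_abs_projE_rpow_le {μ : (Fin d → Ω) → ℝ} (hμ0 : ∀ x, 0 ≤ μ x)
    (T : Finset (Fin d)) (g : (Fin d → Ω) → ℝ) {q : ℝ} (hq : 1 ≤ q) :
    ∑ x, μ x * |projE μ T g x| ^ q ≤ ∑ x, μ x * |g x| ^ q :=
  calc ∑ x, μ x * |projE μ T g x| ^ q
      ≤ ∑ x, μ x * projE μ T (fun z => |g z| ^ q) x :=
        sum_le_sum fun x _ => mul_le_mul_of_nonneg_left (abs_projE_rpow_le hμ0 T g hq x) (hμ0 x)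
    _ = ∑ x, μ x * |g x| ^ q := sum_mul_projE hμ0 T _

lemma projE_coordT (μ : (Fin d → Ω) → ℝ) (i : Fin d) (c : ℝ) (f : (Fin d → Ω) → ℝ)
    (x : Fin d → Ω) :
    projE μ (univ.erase i) (coordT μ i c f) x = projE μ (univ.erase i) f x := by
  unfold coordT
  rw [projE_linear, projE_projE]
  ring

lemma coordT_half (μ : (Fin d → Ω) → ℝ) (i : Fin d) (f : (Fin d → Ω) → ℝ) (x : Fin d → Ω) :
    coordT μ i (1 / 2) f x
      = (1 / 2) * coordT μ i 1 f x + (1 / 2) * projE μ (univ.erase i) (coordT μ i (-1) f) x := by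
  rw [projE_coordT]
  simp only [coordT]
  ring

end ConditionalExpectation

theorem single_coordinate_symmetrization_general {d : ℕ} {Ω : Type} [Fintype Ω] [DecidableEq Ω]
    (μ : (Fin d → Ω) → ℝ) (hμ0 : ∀ x, 0 ≤ μ x)
    (f : (Fin d → Ω) → ℝ) (i : Fin d) (q : ℝ) (hq : 1 < q) :
    pnorm μ q (coordT μ i (1 / 2) f)
      ≤ ((1 / 2) * ∑ x, μ x * |coordT μ i 1 f x| ^ q
         + (1 / 2) * ∑ x, μ x * |coordT μ i (-1) f x| ^ q) ^ (1 / q) := by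
  set E := projE μ (univ.erase i)
  have hpoint : ∀ x, |coordT μ i (1 / 2) f x| ^ q
      ≤ (1 / 2) * |coordT μ i 1 f x| ^ q + (1 / 2) * |E (coordT μ i (-1) f) x| ^ q :=
    fun x => by
      simpa only [coordT_half, smul_eq_mul] using
        (convexOn_abs_rpow hq.le).2 (Set.mem_univ _) (Set.mem_univ _)
          (by norm_num : (0 : ℝ) ≤ 1 / 2) (by norm_num : (0 : ℝ) ≤ 1 / 2) (by norm_num)
  unfold pnorm
  refine Real.rpow_le_rpow (sum_nonneg fun x _ => by have := hμ0 x; positivity) ?_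
    (by positivity)
  calc ∑ x, μ x * |coordT μ i (1 / 2) f x| ^ q
      ≤ ∑ x, μ x * ((1 / 2) * |coordT μ i 1 f x| ^ q
          + (1 / 2) * |E (coordT μ i (-1) f) x| ^ q) :=
        sum_le_sum fun x _ => mul_le_mul_of_nonneg_left (hpoint x) (hμ0 x)
    _ = (1 / 2) * ∑ x, μ x * |coordT μ i 1 f x| ^ q
          + (1 / 2) * ∑ x, μ x * |E (coordT μ i (-1) f) x| ^ q := by
        simp only [mul_sum, ← sum_add_distrib]
        exact sum_congr rfl fun x _ => by ring
    _ ≤ _ := by linarith [sum_mul_abs_projE_rpow_le hμ0 (univ.erase i) (coordT μ i (-1) f) hq.le]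

/-- single-coordinate symmetrization:
`‖T^i_{1/2} f‖_q ≤ ‖T^i_r f‖_q` where `r` is a uniform `±1` bit and the norm on
the right also averages over `r`. -/
theorem single_coordinate_symmetrization {d : ℕ} {Ω : Type} [Fintype Ω] [DecidableEq Ω]
    (μ : (Fin d → Ω) → ℝ) (hμ0 : ∀ x, 0 ≤ μ x) (hμ1 : ∑ x, μ x = 1)
    (f : (Fin d → Ω) → ℝ) (i : Fin d) (q : ℝ) (hq : 1 < q) :
    pnorm μ q (coordT μ i (1 / 2) f)
      ≤ ((1 / 2) * ∑ x, μ x * |coordT μ i 1 f x| ^ q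
         + (1 / 2) * ∑ x, μ x * |coordT μ i (-1) f x| ^ q) ^ (1 / q) :=
  single_coordinate_symmetrization_general μ hμ0 f i q hq
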